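/- arXiv:1401.3375 — 2 statements merged into one kernel-verified Lean document; each statement's English description precedes it below -/
import Mathlib

section
/- For any positive integers K and B, and any message assignment T : {1,...,K} → (subsets of {1,...,K}) satisfying the backhaul load constraint ∑_{i=1}^K |T_i| ≤ B·K, there exist a natural number M with M ≤ K and a subset S ⊆ {1,...,K} with 4·B·|S| ≥ (2M+1)·K such that |T_i| ≤ M for every i ∈ S. -/
/-!
Write `cᵢ = |Tᵢ|`. If `2K + 1 ≤ 4B`, then `M = K` and all users work. Otherwise
`2B ≤ K`, and it suffices to find a threshold `M < 2B` with
`(2M + 1) K ≤ 4B · #{i | cᵢ ≤ M}`. Counting the users above each threshold layer by layer,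
`∑_{M < 2B} #{i | M < cᵢ} ≤ ∑ᵢ cᵢ ≤ BK`, while `∑_{M < 2B} (2M + 1) = 4B²`; hence the
thresholds `M < 2B` satisfy `(2M + 1) K + 4B · #{i | M < cᵢ} ≤ 4BK` on average, so some
threshold satisfies it, which is the required inequality.
-/

open Finset

lemma sum_range_card_filter_lt_le_sum {ι : Type*} (s : Finset ι) (c : ι → ℕ) (n : ℕ) :
    ∑ M ∈ range n, #{i ∈ s | M < c i} ≤ ∑ i ∈ s, c i := by
  simp_rw [card_filter]
  rw [sum_comm]
  gcongr with i
  calc ∑ M ∈ range n, (if M < c i then 1 else 0)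
      = #{M ∈ range n | M < c i} := (card_filter _ _).symm
    _ ≤ #(range (c i)) := card_le_card fun M hM => mem_range.2 (mem_filter.1 hM).2
    _ = c i := card_range _

lemma sum_range_two_mul_add_one (n : ℕ) : ∑ M ∈ range n, (2 * M + 1) = n ^ 2 := by
  induction n with
  | zero => simp
  | succ n ih => rw [sum_range_succ, ih]; ring

lemma exists_lt_two_mul_card_filter_le {ι : Type*} [Fintype ι] (c : ι → ℕ) {B : ℕ} (hB : 0 < B)
    (hc : ∑ i, c i ≤ B * Fintype.card ι) :
    ∃ M < 2 * B, (2 * M + 1) * Fintype.card ι ≤ 4 * B * #{i | c i ≤ M} := by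
  set K := Fintype.card ι
  have hsplit (M : ℕ) : #{i | c i ≤ M} + #{i | M < c i} = K := by
    simpa [not_le] using card_filter_add_card_filter_not (s := univ) (fun i => c i ≤ M)
  have hlayers : ∑ M ∈ range (2 * B), #{i | M < c i} ≤ B * K :=
    (sum_range_card_filter_lt_le_sum univ c _).trans hc
  have hsum : ∑ M ∈ range (2 * B), ((2 * M + 1) * K + 4 * B * #{i | M < c i})
      ≤ ∑ _M ∈ range (2 * B), 4 * B * K := by
    rw [sum_add_distrib, ← sum_mul, sum_range_two_mul_add_one, ← mul_sum, sum_const, card_range,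
      smul_eq_mul]
    nlinarith [hlayers]
  obtain ⟨M, hM, hle⟩ := exists_le_of_sum_le (nonempty_range_iff.2 (by omega)) hsum
  exact ⟨M, mem_range.1 hM, by nlinarith [hsplit M]⟩

theorem backhaul_exists_bounded_subset_general (K B : ℕ) (hB : 0 < B)
    (T : Fin K → Finset (Fin K))
    (hbackhaul : ∑ i, (T i).card ≤ B * K) :
    ∃ M : ℕ, M ≤ K ∧ ∃ S : Finset (Fin K),
      (2 * M + 1) * K ≤ 4 * B * S.card ∧ ∀ i ∈ S, (T i).card ≤ M := by
  by_cases hlarge : 2 * K + 1 ≤ 4 * B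
  · refine ⟨K, le_rfl, univ, ?_, fun i _ => ?_⟩
    · simpa using Nat.mul_le_mul_right K hlarge
    · simpa using card_le_univ (T i)
  · obtain ⟨M, hM, hS⟩ := exists_lt_two_mul_card_filter_le (fun i => (T i).card) hB
      (by rwa [Fintype.card_fin])
    rw [Fintype.card_fin] at hS
    exact ⟨M, by omega, _, hS, fun i hi => (mem_filter.1 hi).2⟩

/-- For any positive integers `K` and `B`, and any message assignment
`T : Fin K → Finset (Fin K)` satisfying the backhaul load constraint
`∑ i, |T i| ≤ B * K`, there exist `M ≤ K` and a subset `S` of the users with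
`4 * B * |S| ≥ (2 * M + 1) * K` such that `|T i| ≤ M` for every `i ∈ S`. -/
theorem backhaul_exists_bounded_subset (K B : ℕ) (hK : 0 < K) (hB : 0 < B)
    (T : Fin K → Finset (Fin K))
    (hbackhaul : ∑ i, (T i).card ≤ B * K) :
    ∃ M : ℕ, M ≤ K ∧ ∃ S : Finset (Fin K),
      (2 * M + 1) * K ≤ 4 * B * S.card ∧ ∀ i ∈ S, (T i).card ≤ M :=
  backhaul_exists_bounded_subset_general K B hB T hbackhaul
end

section
/- Let B and K be positive integers and let f : {1,...,K} → ℕ satisfy ∑_{i=1}^K f(i) ≤ B·K and 4B·|{i : f(i) ≥ 2B}| > K. Then either 4B·|{i : f(i) = 0}| > K, or there exists m with 1 ≤ m ≤ 2B−1 such that 2B·|{i : f(i) = m}| > K. -/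
/-!
Cap every load at `2B` and let `R_j` be the fraction of users with capped load `j`. The
reference fractions `R*_j` also sum to `1` and have mean exactly `B`, so, writing
`D_j = R_j - R*_j` (which sum to `0`),
`∑ j R_j - B = ∑ (j - (2B - 1)) D_j = ∑_{j < 2B} (2B - 1 - j) (-D_j) + D_{2B}`.
If no level below `2B` is overloaded, every summand is nonnegative, and the last one is positive,
so the mean capped load exceeds `B`, contradicting `∑ f i ≤ B K`.
-/

open Finset

theorem sum_range_mul_lt_sum_range_mul {α : Type*} [CommRing α] [LinearOrder α]
    [IsStrictOrderedRing α] {n : ℕ} {x y : ℕ → α}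
    (htotal : ∑ j ∈ range (n + 1), x j = ∑ j ∈ range (n + 1), y j)
    (hle : ∀ j < n, x j ≤ y j) (hlt : y n < x n) :
    ∑ j ∈ range (n + 1), j * y j < ∑ j ∈ range (n + 1), j * x j := by
  have hzero : ∑ j ∈ range (n + 1), (x j - y j) = 0 := by
    rw [sum_sub_distrib, htotal, sub_self]
  have hshift : ∑ j ∈ range (n + 1), ((j : α) + 1 - n) * (x j - y j)
      = ∑ j ∈ range (n + 1), j * x j - ∑ j ∈ range (n + 1), j * y j :=
    calc ∑ j ∈ range (n + 1), ((j : α) + 1 - n) * (x j - y j)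
        = ∑ j ∈ range (n + 1), j * (x j - y j)
            + (1 - n) * ∑ j ∈ range (n + 1), (x j - y j) := by
          rw [mul_sum, ← sum_add_distrib]
          exact sum_congr rfl fun _ _ => by ring
      _ = _ := by simp only [hzero, mul_zero, add_zero, mul_sub, sum_sub_distrib]
  have hlow : 0 ≤ ∑ j ∈ range n, ((j : α) + 1 - n) * (x j - y j) := by
    refine sum_nonneg fun j hj => mul_nonneg_of_nonpos_of_nonpos ?_ ?_
    · have : (j : α) + 1 ≤ n := by exact_mod_cast mem_range.1 hj
      linarith
    · exact sub_nonpos.2 (hle j (mem_range.1 hj))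
  rw [← sub_pos, ← hshift, sum_range_succ, add_sub_cancel_left, one_mul]
  linarith [sub_pos.2 hlt]

/-- `referenceWeight B j = 4B · R*_j`. -/
def referenceWeight (B j : ℕ) : ℕ := if j = 0 ∨ j = 2 * B then 1 else 2

@[simp] theorem referenceWeight_zero (B : ℕ) : referenceWeight B 0 = 1 := by
  simp [referenceWeight]

@[simp] theorem referenceWeight_self (B : ℕ) : referenceWeight B (2 * B) = 1 := by
  simp [referenceWeight]

theorem referenceWeight_of_pos_of_lt {B j : ℕ} (h0 : 0 < j) (hj : j < 2 * B) :
    referenceWeight B j = 2 :=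
  if_neg (by omega)

theorem sum_referenceWeight {B : ℕ} (hB : 0 < B) :
    ∑ j ∈ range (2 * B + 1), referenceWeight B j = 4 * B := by
  obtain ⟨b, hb⟩ : ∃ b, 2 * B = b + 1 := ⟨2 * B - 1, by omega⟩
  rw [sum_range_succ, referenceWeight_self, hb, sum_range_succ', referenceWeight_zero,
    sum_congr rfl fun j hj => referenceWeight_of_pos_of_lt j.succ_pos (by simp at hj; omega)]
  simp only [sum_const, card_range, smul_eq_mul]
  omega

theorem sum_mul_referenceWeight {B : ℕ} (hB : 0 < B) :
    ∑ j ∈ range (2 * B + 1), j * referenceWeight B j = 4 * B ^ 2 := by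
  obtain ⟨b, hb⟩ : ∃ b, 2 * B = b + 1 := ⟨2 * B - 1, by omega⟩
  have hgauss := sum_range_id_mul_two (b + 1)
  rw [sum_range_succ', add_zero] at hgauss
  rw [sum_range_succ, referenceWeight_self, hb, sum_range_succ', zero_mul, add_zero,
    sum_congr rfl fun j hj => by
      rw [referenceWeight_of_pos_of_lt j.succ_pos (by simp at hj; omega)], ← sum_mul,
    hgauss, Nat.add_sub_cancel, ← mul_add, ← sq, ← hb]
  ring

theorem mul_lt_sum_range_mul_of_exceeds_reference {B K : ℕ} {c : ℕ → ℕ} (hB : 0 < B)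
    (hcount : ∑ j ∈ range (2 * B + 1), c j = K) (hzero : 4 * B * c 0 ≤ K)
    (hmid : ∀ j, 0 < j → j < 2 * B → 2 * B * c j ≤ K) (htop : K < 4 * B * c (2 * B)) :
    B * K < ∑ j ∈ range (2 * B + 1), j * c j := by
  have htotal : ∑ j ∈ range (2 * B + 1), 4 * B * c j
      = ∑ j ∈ range (2 * B + 1), K * referenceWeight B j := by
    rw [← mul_sum, ← mul_sum, hcount, sum_referenceWeight hB, mul_comm]
  have hle : ∀ j < 2 * B, 4 * B * c j ≤ K * referenceWeight B j := by
    intro j hj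
    rcases Nat.eq_zero_or_pos j with rfl | hpos
    · simpa using hzero
    · rw [referenceWeight_of_pos_of_lt hpos hj]
      linarith [hmid j hpos hj]
  have hlt : K * referenceWeight B (2 * B) < 4 * B * c (2 * B) := by simpa using htop
  have key : ∑ j ∈ range (2 * B + 1), j * (K * referenceWeight B j)
      < ∑ j ∈ range (2 * B + 1), j * (4 * B * c j) := by
    exact_mod_cast sum_range_mul_lt_sum_range_mul (α := ℤ)
      (x := fun j => (4 * B * c j : ℕ)) (y := fun j => (K * referenceWeight B j : ℕ))
      (by exact_mod_cast htotal) (fun j hj => by exact_mod_cast hle j hj) (by exact_mod_cast hlt)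
  simp only [mul_left_comm _ K, mul_left_comm _ (4 * B), ← mul_sum,
    sum_mul_referenceWeight hB] at key
  nlinarith

theorem sum_eq_sum_range_mul_card_filter {ι : Type*} {s : Finset ι} {g : ι → ℕ} {N : ℕ}
    (hg : ∀ i ∈ s, g i ≤ N) :
    ∑ i ∈ s, g i = ∑ j ∈ range (N + 1), j * #{i ∈ s | g i = j} := by
  simpa only [sum_const, smul_eq_mul, mul_comm, id] using
    (sum_fiberwise_of_maps_to' (fun i hi => mem_range_succ_iff.2 (hg i hi)) id).symm

section Truncation

variable {ι : Type*} (s : Finset ι) (f : ι → ℕ) {N : ℕ}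

theorem card_filter_min_eq_of_lt {m : ℕ} (hm : m < N) :
    #{i ∈ s | min (f i) N = m} = #{i ∈ s | f i = m} :=
  congrArg card (filter_congr fun i _ => by omega)

theorem card_filter_min_eq_self :
    #{i ∈ s | min (f i) N = N} = #{i ∈ s | N ≤ f i} :=
  congrArg card (filter_congr fun i _ => by omega)

end Truncation

theorem exists_overloaded_level_general (B K : ℕ) (hB : 0 < B)
    (f : Fin K → ℕ) (hsum : ∑ i, f i ≤ B * K)
    (hbig : K < 4 * B * (Finset.univ.filter (fun i => 2 * B ≤ f i)).card) :
    K < 4 * B * (Finset.univ.filter (fun i => f i = 0)).card ∨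
      ∃ m : ℕ, 1 ≤ m ∧ m ≤ 2 * B - 1 ∧
        K < 2 * B * (Finset.univ.filter (fun i => f i = m)).card := by
  by_contra! hcon
  obtain ⟨hzero, hmid⟩ := hcon
  have hcap : ∀ i ∈ (univ : Finset (Fin K)), min (f i) (2 * B) ≤ 2 * B :=
    fun i _ => min_le_right _ _
  have hmean := mul_lt_sum_range_mul_of_exceeds_reference
    (c := fun j => #{i | min (f i) (2 * B) = j}) hB
    (by rw [← card_eq_sum_card_fiberwise fun i hi => mem_range_succ_iff.2 (hcap i hi), card_univ,
      Fintype.card_fin])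
    (by rwa [card_filter_min_eq_of_lt _ _ (by omega)])
    (fun j hj0 hj => by rw [card_filter_min_eq_of_lt _ _ hj]; exact hmid j hj0 (by omega))
    (by rwa [card_filter_min_eq_self])
  rw [← sum_eq_sum_range_mul_card_filter hcap] at hmean
  have hcapped : ∑ i, min (f i) (2 * B) ≤ B * K :=
    (sum_le_sum fun i _ => min_le_left _ _).trans hsum
  omega

/-- If `f : Fin K → ℕ` satisfies `∑ i, f i ≤ B * K` and more than a `1/(4B)`
fraction of indices have `f i ≥ 2B`, then either more than a `1/(4B)` fraction
have `f i = 0`, or for some `m` with `1 ≤ m ≤ 2B - 1` more than a `1/(2B)`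
fraction have `f i = m`. -/
theorem exists_overloaded_level (B K : ℕ) (hB : 0 < B) (hK : 0 < K)
    (f : Fin K → ℕ) (hsum : ∑ i, f i ≤ B * K)
    (hbig : K < 4 * B * (Finset.univ.filter (fun i => 2 * B ≤ f i)).card) :
    K < 4 * B * (Finset.univ.filter (fun i => f i = 0)).card ∨
      ∃ m : ℕ, 1 ≤ m ∧ m ≤ 2 * B - 1 ∧
        K < 2 * B * (Finset.univ.filter (fun i => f i = m)).card :=
  exists_overloaded_level_general B K hB f hsum hbig
end
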